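/- arXiv:1804.10195 — 5 statements merged into one kernel-verified Lean document; each statement's English description precedes it below -/
import Mathlib

section
/- Let $D(\xi,\eta) = -27a\xi^4 - 54b\xi^3\eta - 18a^2\xi^2\eta^2 - 54ab\xi\eta^3 + (a^3 - 27b^2)\eta^4$ in $\mathbb{Q}[a,b,\xi,\eta]$, and define $A = \frac{1}{108}\left(D_{\xi\xi}D_{\eta\eta} - D_{\xi\eta}^2\right)$ and $B = \frac{1}{36}\left(D_{\xi}A_{\eta} - D_{\eta}A_{\xi}\right)$, where subscripts denote partial derivatives. Then in $\mathbb{Q}[a,b,\xi,\eta]$ one has the identity $-4A^3 - 27B^2 = 16(4a^3 + 27b^2)^2 D^3$. -/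
open MvPolynomial

noncomputable section

/-- The Klein form for 3-congruences with power ε = 2, in `ℚ[a,b,ξ,η]` with
`a = X 0`, `b = X 1`, `ξ = X 2`, `η = X 3`. -/
def kleinD32 : MvPolynomial (Fin 4) ℚ :=
  -27*(X 0)*(X 2)^4 - 54*(X 1)*(X 2)^3*(X 3) - 18*(X 0)^2*(X 2)^2*(X 3)^2
    - 54*(X 0)*(X 1)*(X 2)*(X 3)^3 + ((X 0)^3 - 27*(X 1)^2)*(X 3)^4

/-- `A = (1/108)(D_ξξ D_ηη - D_ξη²)`. -/
def kleinA32 : MvPolynomial (Fin 4) ℚ :=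
  C (1/108 : ℚ) * (pderiv 2 (pderiv 2 kleinD32) * pderiv 3 (pderiv 3 kleinD32)
    - (pderiv 3 (pderiv 2 kleinD32))^2)

/-- `B = (1/36)(D_ξ A_η - D_η A_ξ)`. -/
def kleinB32 : MvPolynomial (Fin 4) ℚ :=
  C (1/36 : ℚ) * (pderiv 2 kleinD32 * pderiv 3 kleinA32
    - pderiv 3 kleinD32 * pderiv 2 kleinA32)


lemma pd_ofNat (i : Fin 4) (n : ℕ) [n.AtLeastTwo] :
    pderiv i (OfNat.ofNat n : MvPolynomial (Fin 4) ℚ) = 0 := by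
  conv_lhs => rw [← Nat.cast_ofNat (R := MvPolynomial (Fin 4) ℚ) (n := n)]
  exact Derivation.map_natCast _ _

def e2 : MvPolynomial (Fin 4) ℚ := (-36)*X 0^2*X 2*X 3^2 + (-54)*X 0*X 1*X 3^3 + (-108)*X 0*X 2^3 + (-162)*X 1*X 2^2*X 3

def e3 : MvPolynomial (Fin 4) ℚ := 4*X 0^3*X 3^3 + (-36)*X 0^2*X 2^2*X 3 + (-162)*X 0*X 1*X 2*X 3^2 + (-108)*X 1^2*X 3^3 + (-54)*X 1*X 2^3

def e22 : MvPolynomial (Fin 4) ℚ := (-36)*X 0^2*X 3^2 + (-324)*X 0*X 2^2 + (-324)*X 1*X 2*X 3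

def e33 : MvPolynomial (Fin 4) ℚ := 12*X 0^3*X 3^2 + (-36)*X 0^2*X 2^2 + (-324)*X 0*X 1*X 2*X 3 + (-324)*X 1^2*X 3^2

def e23 : MvPolynomial (Fin 4) ℚ := (-72)*X 0^2*X 2*X 3 + (-162)*X 0*X 1*X 3^2 + (-162)*X 1*X 2^2

def eA : MvPolynomial (Fin 4) ℚ := (-4)*X 0^5*X 3^4 + (-72)*X 0^4*X 2^2*X 3^2 + (-144)*X 0^3*X 1*X 2*X 3^3 + 108*X 0^3*X 2^4 + (-135)*X 0^2*X 1^2*X 3^4 + 864*X 0^2*X 1*X 2^3*X 3 + 1458*X 0*X 1^2*X 2^2*X 3^2 + 972*X 1^3*X 2*X 3^3 + (-243)*X 1^2*X 2^4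

def eA2 : MvPolynomial (Fin 4) ℚ := (-144)*X 0^4*X 2*X 3^2 + (-144)*X 0^3*X 1*X 3^3 + 432*X 0^3*X 2^3 + 2592*X 0^2*X 1*X 2^2*X 3 + 2916*X 0*X 1^2*X 2*X 3^2 + 972*X 1^3*X 3^3 + (-972)*X 1^2*X 2^3

def eA3 : MvPolynomial (Fin 4) ℚ := (-16)*X 0^5*X 3^3 + (-144)*X 0^4*X 2^2*X 3 + (-432)*X 0^3*X 1*X 2*X 3^2 + (-540)*X 0^2*X 1^2*X 3^3 + 864*X 0^2*X 1*X 2^3 + 2916*X 0*X 1^2*X 2^2*X 3 + 2916*X 1^3*X 2*X 3^2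

def eB : MvPolynomial (Fin 4) ℚ := 32*X 0^7*X 2*X 3^5 + 40*X 0^6*X 1*X 3^6 + (-360)*X 0^5*X 1*X 2^2*X 3^4 + 864*X 0^5*X 2^5*X 3 + (-216)*X 0^4*X 1^2*X 2*X 3^5 + 5400*X 0^4*X 1*X 2^4*X 3^2 + 270*X 0^3*X 1^3*X 3^6 + 15120*X 0^3*X 1^2*X 2^3*X 3^3 + (-1944)*X 0^3*X 1*X 2^6 + 17010*X 0^2*X 1^3*X 2^2*X 3^4 + (-9720)*X 0^2*X 1^2*X 2^5*X 3 + 8748*X 0*X 1^4*X 2*X 3^5 + (-21870)*X 0*X 1^3*X 2^4*X 3^2 + 2916*X 1^5*X 3^6 + (-14580)*X 1^4*X 2^3*X 3^3 + (-1458)*X 1^3*X 2^6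


lemma hD2 : pderiv 2 kleinD32 = e2 := by
  simp only [kleinD32, pd_ofNat _ 4, pd_ofNat _ 12, pd_ofNat _ 16, pd_ofNat _ 18, pd_ofNat _ 27, pd_ofNat _ 36,
    pd_ofNat _ 40, pd_ofNat _ 32, pd_ofNat _ 54, pd_ofNat _ 72, pd_ofNat _ 108, pd_ofNat _ 135, pd_ofNat _ 144,
    pd_ofNat _ 162, pd_ofNat _ 216, pd_ofNat _ 243, pd_ofNat _ 270, pd_ofNat _ 324, pd_ofNat _ 360, pd_ofNat _ 432,
    pd_ofNat _ 540, pd_ofNat _ 864, pd_ofNat _ 972, pd_ofNat _ 1458, pd_ofNat _ 2592, pd_ofNat _ 2916,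
    map_add, map_sub, map_neg, pderiv_mul, pderiv_pow, pderiv_one,
    pderiv_X_self, pderiv_X_of_ne (show (0:Fin 4) ≠ 2 by decide),
    pderiv_X_of_ne (show (1:Fin 4) ≠ 2 by decide),
    pderiv_X_of_ne (show (3:Fin 4) ≠ 2 by decide),
    pderiv_X_of_ne (show (0:Fin 4) ≠ 3 by decide),
    pderiv_X_of_ne (show (1:Fin 4) ≠ 3 by decide),
    pderiv_X_of_ne (show (2:Fin 4) ≠ 3 by decide),
    zero_mul, mul_zero, neg_zero, zero_add, add_zero, sub_zero, zero_sub, mul_one, one_mul]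
  rw [e2]; ring

lemma hD3 : pderiv 3 kleinD32 = e3 := by
  simp only [kleinD32, pd_ofNat _ 4, pd_ofNat _ 12, pd_ofNat _ 16, pd_ofNat _ 18, pd_ofNat _ 27, pd_ofNat _ 36,
    pd_ofNat _ 40, pd_ofNat _ 32, pd_ofNat _ 54, pd_ofNat _ 72, pd_ofNat _ 108, pd_ofNat _ 135, pd_ofNat _ 144,
    pd_ofNat _ 162, pd_ofNat _ 216, pd_ofNat _ 243, pd_ofNat _ 270, pd_ofNat _ 324, pd_ofNat _ 360, pd_ofNat _ 432,
    pd_ofNat _ 540, pd_ofNat _ 864, pd_ofNat _ 972, pd_ofNat _ 1458, pd_ofNat _ 2592, pd_ofNat _ 2916,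
    map_add, map_sub, map_neg, pderiv_mul, pderiv_pow, pderiv_one,
    pderiv_X_self, pderiv_X_of_ne (show (0:Fin 4) ≠ 2 by decide),
    pderiv_X_of_ne (show (1:Fin 4) ≠ 2 by decide),
    pderiv_X_of_ne (show (3:Fin 4) ≠ 2 by decide),
    pderiv_X_of_ne (show (0:Fin 4) ≠ 3 by decide),
    pderiv_X_of_ne (show (1:Fin 4) ≠ 3 by decide),
    pderiv_X_of_ne (show (2:Fin 4) ≠ 3 by decide),
    zero_mul, mul_zero, neg_zero, zero_add, add_zero, sub_zero, zero_sub, mul_one, one_mul]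
  rw [e3]; ring

lemma hD22 : pderiv 2 (pderiv 2 kleinD32) = e22 := by
  rw [hD2]
  simp only [e2, pd_ofNat _ 4, pd_ofNat _ 12, pd_ofNat _ 16, pd_ofNat _ 18, pd_ofNat _ 27, pd_ofNat _ 36,
    pd_ofNat _ 40, pd_ofNat _ 32, pd_ofNat _ 54, pd_ofNat _ 72, pd_ofNat _ 108, pd_ofNat _ 135, pd_ofNat _ 144,
    pd_ofNat _ 162, pd_ofNat _ 216, pd_ofNat _ 243, pd_ofNat _ 270, pd_ofNat _ 324, pd_ofNat _ 360, pd_ofNat _ 432,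
    pd_ofNat _ 540, pd_ofNat _ 864, pd_ofNat _ 972, pd_ofNat _ 1458, pd_ofNat _ 2592, pd_ofNat _ 2916,
    map_add, map_sub, map_neg, pderiv_mul, pderiv_pow, pderiv_one,
    pderiv_X_self, pderiv_X_of_ne (show (0:Fin 4) ≠ 2 by decide),
    pderiv_X_of_ne (show (1:Fin 4) ≠ 2 by decide),
    pderiv_X_of_ne (show (3:Fin 4) ≠ 2 by decide),
    pderiv_X_of_ne (show (0:Fin 4) ≠ 3 by decide),
    pderiv_X_of_ne (show (1:Fin 4) ≠ 3 by decide),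
    pderiv_X_of_ne (show (2:Fin 4) ≠ 3 by decide),
    zero_mul, mul_zero, neg_zero, zero_add, add_zero, sub_zero, zero_sub, mul_one, one_mul]
  rw [e22]; ring

lemma hD33 : pderiv 3 (pderiv 3 kleinD32) = e33 := by
  rw [hD3]
  simp only [e3, pd_ofNat _ 4, pd_ofNat _ 12, pd_ofNat _ 16, pd_ofNat _ 18, pd_ofNat _ 27, pd_ofNat _ 36,
    pd_ofNat _ 40, pd_ofNat _ 32, pd_ofNat _ 54, pd_ofNat _ 72, pd_ofNat _ 108, pd_ofNat _ 135, pd_ofNat _ 144,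
    pd_ofNat _ 162, pd_ofNat _ 216, pd_ofNat _ 243, pd_ofNat _ 270, pd_ofNat _ 324, pd_ofNat _ 360, pd_ofNat _ 432,
    pd_ofNat _ 540, pd_ofNat _ 864, pd_ofNat _ 972, pd_ofNat _ 1458, pd_ofNat _ 2592, pd_ofNat _ 2916,
    map_add, map_sub, map_neg, pderiv_mul, pderiv_pow, pderiv_one,
    pderiv_X_self, pderiv_X_of_ne (show (0:Fin 4) ≠ 2 by decide),
    pderiv_X_of_ne (show (1:Fin 4) ≠ 2 by decide),
    pderiv_X_of_ne (show (3:Fin 4) ≠ 2 by decide),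
    pderiv_X_of_ne (show (0:Fin 4) ≠ 3 by decide),
    pderiv_X_of_ne (show (1:Fin 4) ≠ 3 by decide),
    pderiv_X_of_ne (show (2:Fin 4) ≠ 3 by decide),
    zero_mul, mul_zero, neg_zero, zero_add, add_zero, sub_zero, zero_sub, mul_one, one_mul]
  rw [e33]; ring

lemma hD23 : pderiv 3 (pderiv 2 kleinD32) = e23 := by
  rw [hD2]
  simp only [e2, pd_ofNat _ 4, pd_ofNat _ 12, pd_ofNat _ 16, pd_ofNat _ 18, pd_ofNat _ 27, pd_ofNat _ 36,
    pd_ofNat _ 40, pd_ofNat _ 32, pd_ofNat _ 54, pd_ofNat _ 72, pd_ofNat _ 108, pd_ofNat _ 135, pd_ofNat _ 144,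
    pd_ofNat _ 162, pd_ofNat _ 216, pd_ofNat _ 243, pd_ofNat _ 270, pd_ofNat _ 324, pd_ofNat _ 360, pd_ofNat _ 432,
    pd_ofNat _ 540, pd_ofNat _ 864, pd_ofNat _ 972, pd_ofNat _ 1458, pd_ofNat _ 2592, pd_ofNat _ 2916,
    map_add, map_sub, map_neg, pderiv_mul, pderiv_pow, pderiv_one,
    pderiv_X_self, pderiv_X_of_ne (show (0:Fin 4) ≠ 2 by decide),
    pderiv_X_of_ne (show (1:Fin 4) ≠ 2 by decide),
    pderiv_X_of_ne (show (3:Fin 4) ≠ 2 by decide),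
    pderiv_X_of_ne (show (0:Fin 4) ≠ 3 by decide),
    pderiv_X_of_ne (show (1:Fin 4) ≠ 3 by decide),
    pderiv_X_of_ne (show (2:Fin 4) ≠ 3 by decide),
    zero_mul, mul_zero, neg_zero, zero_add, add_zero, sub_zero, zero_sub, mul_one, one_mul]
  rw [e23]; ring

lemma c_unit : (C (1/108 : ℚ) : MvPolynomial (Fin 4) ℚ) * 108 = 1 := by
  rw [show (108 : MvPolynomial (Fin 4) ℚ) = C 108 from (map_ofNat _ _).symm, ← C_mul]
  norm_num

lemma c_unit' : (C (1/36 : ℚ) : MvPolynomial (Fin 4) ℚ) * 36 = 1 := by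
  rw [show (36 : MvPolynomial (Fin 4) ℚ) = C 36 from (map_ofNat _ _).symm, ← C_mul]
  norm_num

lemma hA : kleinA32 = eA := by
  rw [kleinA32, hD22, hD33, hD23,
    show e22 * e33 - e23 ^ 2 = 108 * eA from by rw [e22, e33, e23, eA]; ring,
    ← mul_assoc, c_unit, one_mul]

lemma hA2 : pderiv 2 kleinA32 = eA2 := by
  rw [hA]
  simp only [eA, pd_ofNat _ 4, pd_ofNat _ 12, pd_ofNat _ 16, pd_ofNat _ 18, pd_ofNat _ 27, pd_ofNat _ 36,
    pd_ofNat _ 40, pd_ofNat _ 32, pd_ofNat _ 54, pd_ofNat _ 72, pd_ofNat _ 108, pd_ofNat _ 135, pd_ofNat _ 144,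
    pd_ofNat _ 162, pd_ofNat _ 216, pd_ofNat _ 243, pd_ofNat _ 270, pd_ofNat _ 324, pd_ofNat _ 360, pd_ofNat _ 432,
    pd_ofNat _ 540, pd_ofNat _ 864, pd_ofNat _ 972, pd_ofNat _ 1458, pd_ofNat _ 2592, pd_ofNat _ 2916,
    map_add, map_sub, map_neg, pderiv_mul, pderiv_pow, pderiv_one,
    pderiv_X_self, pderiv_X_of_ne (show (0:Fin 4) ≠ 2 by decide),
    pderiv_X_of_ne (show (1:Fin 4) ≠ 2 by decide),
    pderiv_X_of_ne (show (3:Fin 4) ≠ 2 by decide),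
    pderiv_X_of_ne (show (0:Fin 4) ≠ 3 by decide),
    pderiv_X_of_ne (show (1:Fin 4) ≠ 3 by decide),
    pderiv_X_of_ne (show (2:Fin 4) ≠ 3 by decide),
    zero_mul, mul_zero, neg_zero, zero_add, add_zero, sub_zero, zero_sub, mul_one, one_mul]
  rw [eA2]; ring

lemma hA3 : pderiv 3 kleinA32 = eA3 := by
  rw [hA]
  simp only [eA, pd_ofNat _ 4, pd_ofNat _ 12, pd_ofNat _ 16, pd_ofNat _ 18, pd_ofNat _ 27, pd_ofNat _ 36,
    pd_ofNat _ 40, pd_ofNat _ 32, pd_ofNat _ 54, pd_ofNat _ 72, pd_ofNat _ 108, pd_ofNat _ 135, pd_ofNat _ 144,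
    pd_ofNat _ 162, pd_ofNat _ 216, pd_ofNat _ 243, pd_ofNat _ 270, pd_ofNat _ 324, pd_ofNat _ 360, pd_ofNat _ 432,
    pd_ofNat _ 540, pd_ofNat _ 864, pd_ofNat _ 972, pd_ofNat _ 1458, pd_ofNat _ 2592, pd_ofNat _ 2916,
    map_add, map_sub, map_neg, pderiv_mul, pderiv_pow, pderiv_one,
    pderiv_X_self, pderiv_X_of_ne (show (0:Fin 4) ≠ 2 by decide),
    pderiv_X_of_ne (show (1:Fin 4) ≠ 2 by decide),
    pderiv_X_of_ne (show (3:Fin 4) ≠ 2 by decide),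
    pderiv_X_of_ne (show (0:Fin 4) ≠ 3 by decide),
    pderiv_X_of_ne (show (1:Fin 4) ≠ 3 by decide),
    pderiv_X_of_ne (show (2:Fin 4) ≠ 3 by decide),
    zero_mul, mul_zero, neg_zero, zero_add, add_zero, sub_zero, zero_sub, mul_one, one_mul]
  rw [eA3]; ring

lemma hB : kleinB32 = eB := by
  rw [kleinB32, hD2, hD3, hA2, hA3,
    show e2 * eA3 - e3 * eA2 = 36 * eB from by rw [e2, e3, eA2, eA3, eB]; ring,
    ← mul_assoc, c_unit', one_mul]

/-- In `ℚ[a,b,ξ,η]` one has the syzygy `-4A³ - 27B² = 16(4a³ + 27b²)² D³`. -/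
theorem klein_syzygy_3_2 :
    -4*kleinA32^3 - 27*kleinB32^2
      = 16*(4*(X 0 : MvPolynomial (Fin 4) ℚ)^3 + 27*(X 1)^2)^2 * kleinD32^3 := by
  rw [hA, hB, eA, eB, kleinD32]; ring
end
end

section
/- Let $a, b, x$ be indeterminates over $\mathbb{Q}$, set $\Delta = -4a^3 - 27b^2$, and define $f(x) = x^3 + ax + b$, $g(x) = 3ax^4 + 18bx^3 - 6a^2x^2 - 6abx - a^3 - 9b^2$, and $j(x) = 27bx^3 - 18a^2x^2 - 27abx - 2a^3 - 27b^2$. Setting $r = \Delta f^4$, $s = \Delta f^2 g$, $v = g^3$, and $w = 2g^3 - g^2 j - 4\Delta f^2 g$, one has in $\mathbb{Q}[a,b,x]$ the identity $r(4s - 2v + w)^2 + 27rsv + sw^2 - s^2(v - 4w) = 0$. -/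
open MvPolynomial

/-- In `ℚ[a,b,x]` (with `a = X 0`, `b = X 1`, `x = X 2`), with `Δ = -4a³ - 27b²`,
`f = x³ + ax + b`, `g = 3ax⁴ + 18bx³ - 6a²x² - 6abx - a³ - 9b²`,
`j = 27bx³ - 18a²x² - 27abx - 2a³ - 27b²`, and `r = Δf⁴`, `s = Δf²g`, `v = g³`,
`w = 2g³ - g²j - 4Δf²g`, one has
`r(4s - 2v + w)² + 27rsv + sw² - s²(v - 4w) = 0`. -/
theorem Z52_equation :
    letI a : MvPolynomial (Fin 3) ℚ := X 0
    letI b : MvPolynomial (Fin 3) ℚ := X 1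
    letI x : MvPolynomial (Fin 3) ℚ := X 2
    letI Δ := -4*a^3 - 27*b^2
    letI f := x^3 + a*x + b
    letI g := 3*a*x^4 + 18*b*x^3 - 6*a^2*x^2 - 6*a*b*x - a^3 - 9*b^2
    letI j := 27*b*x^3 - 18*a^2*x^2 - 27*a*b*x - 2*a^3 - 27*b^2
    letI r := Δ*f^4
    letI s := Δ*f^2*g
    letI v := g^3
    letI w := 2*g^3 - g^2*j - 4*Δ*f^2*g
    r*(4*s - 2*v + w)^2 + 27*r*s*v + s*w^2 - s^2*(v - 4*w) = 0 := by
  ring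
end

section
/- For all $u, v, x, y$ in the field $\mathbb{Q}_3$ of $3$-adic numbers, if $\tfrac{2}{75}(7u^2 - 12uv + 18v^2) = \tfrac{1}{450}(139x^2 + 76xy + 316y^2)$ then $u = v = x = y = 0$. -/
private lemma zmod_helper1 : ∀ A B C D : ZMod 3,
    12*(7*A^2 - 12*A*B + 18*B^2) = 139*C^2 + 76*C*D + 316*D^2 → C = D := by decide

private lemma zmod_helper2 : ∀ A B C E : ZMod 3,
    4*(7*A^2 - 12*A*B + 18*B^2) = 3*(59*C^2 + 236*C*E + 316*E^2) → A = 0 := by decide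

private lemma zmod_helper3 : ∀ A B C E : ZMod 3,
    4*(21*A^2 - 12*A*B + 6*B^2) = 59*C^2 + 236*C*E + 316*E^2 → C = 0 ∧ E = 0 := by decide

private lemma zmod_helper4 : ∀ A B C E : ZMod 3,
    4*(7*A^2 - 4*A*B + 2*B^2) = 3*(59*C^2 + 236*C*E + 316*E^2) → B = 0 := by decide

private lemma dvd_of_toZMod_eq_zero {x : ℤ_[3]} (h : PadicInt.toZMod x = 0) :
    (3 : ℤ_[3]) ∣ x := by
  have hx : x ∈ RingHom.ker (PadicInt.toZMod : ℤ_[3] →+* ZMod 3) := h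
  rw [PadicInt.ker_toZMod, PadicInt.maximalIdeal_eq_span_p, Ideal.mem_span_singleton] at hx
  simpa using hx

private lemma padicThree_ne_zero : (3 : ℤ_[3]) ≠ 0 := by
  have h : ((3:ℕ) : ℤ_[3]) ≠ 0 := Nat.cast_ne_zero.mpr (by norm_num)
  exact_mod_cast h

/-- Key step: any integral solution has all variables divisible by 3. -/
private lemma step (a b c d : ℤ_[3])
    (h : 12*(7*a^2 - 12*a*b + 18*b^2) = 139*c^2 + 76*c*d + 316*d^2) :
    ∃ a' b' c' d' : ℤ_[3], a = 3*a' ∧ b = 3*b' ∧ c = 3*c' ∧ d = 3*d' := by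
  have hmap := congrArg (PadicInt.toZMod : ℤ_[3] →+* ZMod 3) h
  simp only [map_mul, map_add, map_sub, map_pow, map_ofNat] at hmap
  have hcd : PadicInt.toZMod c = PadicInt.toZMod d :=
    zmod_helper1 _ _ _ _ hmap
  obtain ⟨e, he⟩ : (3 : ℤ_[3]) ∣ (d - c) :=
    dvd_of_toZMod_eq_zero (by rw [map_sub, hcd, sub_self])
  have hd2 : d = c + 3*e := by linear_combination he
  rw [hd2] at h
  have h2 : 4*(7*a^2 - 12*a*b + 18*b^2) = 3*(59*c^2 + 236*c*e + 316*e^2) :=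
    mul_left_cancel₀ padicThree_ne_zero (by linear_combination h)
  have hmap2 := congrArg (PadicInt.toZMod : ℤ_[3] →+* ZMod 3) h2
  simp only [map_mul, map_add, map_sub, map_pow, map_ofNat] at hmap2
  have ha0 : PadicInt.toZMod a = 0 := zmod_helper2 _ _ _ _ hmap2
  obtain ⟨a₁, ha⟩ : (3 : ℤ_[3]) ∣ a := dvd_of_toZMod_eq_zero ha0
  rw [ha] at h2
  have h3 : 4*(21*a₁^2 - 12*a₁*b + 6*b^2) = 59*c^2 + 236*c*e + 316*e^2 :=
    mul_left_cancel₀ padicThree_ne_zero (by linear_combination h2)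
  have hmap3 := congrArg (PadicInt.toZMod : ℤ_[3] →+* ZMod 3) h3
  simp only [map_mul, map_add, map_sub, map_pow, map_ofNat] at hmap3
  obtain ⟨hc0, he0⟩ := zmod_helper3 _ _ _ _ hmap3
  obtain ⟨c₁, hc⟩ : (3 : ℤ_[3]) ∣ c := dvd_of_toZMod_eq_zero hc0
  obtain ⟨e₁, he1⟩ : (3 : ℤ_[3]) ∣ e := dvd_of_toZMod_eq_zero he0
  rw [hc, he1] at h3
  have h4 : 4*(7*a₁^2 - 4*a₁*b + 2*b^2) = 3*(59*c₁^2 + 236*c₁*e₁ + 316*e₁^2) :=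
    mul_left_cancel₀ padicThree_ne_zero (by linear_combination h3)
  have hmap4 := congrArg (PadicInt.toZMod : ℤ_[3] →+* ZMod 3) h4
  simp only [map_mul, map_add, map_sub, map_pow, map_ofNat] at hmap4
  have hb0 : PadicInt.toZMod b = 0 := zmod_helper4 _ _ _ _ hmap4
  obtain ⟨b₁, hb⟩ : (3 : ℤ_[3]) ∣ b := dvd_of_toZMod_eq_zero hb0
  exact ⟨a₁, b₁, c₁, c₁ + 3*e₁, ha, hb, hc, by rw [hd2, hc, he1]; ring⟩

private lemma descent : ∀ (n : ℕ) (a b c d : ℤ_[3]),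
    12*(7*a^2 - 12*a*b + 18*b^2) = 139*c^2 + 76*c*d + 316*d^2 →
    (3:ℤ_[3])^n ∣ a ∧ (3:ℤ_[3])^n ∣ b ∧ (3:ℤ_[3])^n ∣ c ∧ (3:ℤ_[3])^n ∣ d := by
  intro n
  induction n with
  | zero => intro a b c d _; simp
  | succ n ih =>
    intro a b c d h
    obtain ⟨a', b', c', d', ha, hb, hc, hd⟩ := step a b c d h
    have h9 : (9 : ℤ_[3]) ≠ 0 := by
      intro h0
      exact padicThree_ne_zero (by
        have : (3:ℤ_[3]) * 3 = 0 := by linear_combination h0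
        rcases mul_eq_zero.mp this with h' | h' <;> exact h')
    have h' : 12*(7*a'^2 - 12*a'*b' + 18*b'^2) = 139*c'^2 + 76*c'*d' + 316*d'^2 := by
      apply mul_left_cancel₀ h9
      rw [ha, hb, hc, hd] at h
      linear_combination h
    obtain ⟨da, db, dc, dd⟩ := ih a' b' c' d' h'
    refine ⟨?_, ?_, ?_, ?_⟩
    · obtain ⟨k, hk⟩ := da; exact ⟨k, by rw [ha, hk, pow_succ]; ring⟩
    · obtain ⟨k, hk⟩ := db; exact ⟨k, by rw [hb, hk, pow_succ]; ring⟩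
    · obtain ⟨k, hk⟩ := dc; exact ⟨k, by rw [hc, hk, pow_succ]; ring⟩
    · obtain ⟨k, hk⟩ := dd; exact ⟨k, by rw [hd, hk, pow_succ]; ring⟩

private lemma eq_zero_of_forall_pow_dvd (x : ℤ_[3]) (h : ∀ n : ℕ, (3:ℤ_[3])^n ∣ x) :
    x = 0 := by
  by_contra hx
  obtain ⟨k, hk⟩ := PadicInt.exists_pow_neg_lt 3 (norm_pos_iff.mpr hx)
  have hmem : x ∈ Ideal.span {((3:ℕ) : ℤ_[3])^k} := by
    rw [Ideal.mem_span_singleton]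
    simpa using h k
  have := (PadicInt.norm_le_pow_iff_mem_span_pow x k).mpr hmem
  have : ‖x‖ < ‖x‖ := lt_of_le_of_lt (by simpa using this) hk
  exact lt_irrefl _ this

/-- The quadratic form `(2/75)(7u² - 12uv + 18v²) - (1/450)(139x² + 76xy + 316y²)` is
anisotropic over `ℚ₃`. -/
theorem Z101_form_anisotropic_over_Q3 :
    ∀ u v x y : ℚ_[3],
      (2/75 : ℚ_[3]) * (7*u^2 - 12*u*v + 18*v^2)
          = (1/450 : ℚ_[3]) * (139*x^2 + 76*x*y + 316*y^2) →
        u = 0 ∧ v = 0 ∧ x = 0 ∧ y = 0 := by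
  intro u v x y h
  have h1 : 12*(7*u^2 - 12*u*v + 18*v^2) = 139*x^2 + 76*x*y + 316*y^2 := by
    linear_combination (450 : ℚ_[3]) * h
  -- find a common scaling power
  obtain ⟨N, hN⟩ := pow_unbounded_of_one_lt (‖u‖ + ‖v‖ + ‖x‖ + ‖y‖) (by norm_num : (1:ℝ) < 3)
  have hnorm3 : ‖(3 : ℚ_[3])‖ = (3:ℝ)⁻¹ := by
    simpa using @Padic.norm_p 3 ⟨by norm_num⟩
  have hbound : ∀ z : ℚ_[3], ‖z‖ ≤ ‖u‖ + ‖v‖ + ‖x‖ + ‖y‖ → ‖(3:ℚ_[3])^N * z‖ ≤ 1 := by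
    intro z hz
    rw [norm_mul, norm_pow, hnorm3]
    have h3pos : (0:ℝ) < 3 := by norm_num
    have hle : ‖z‖ ≤ 3^N := le_trans hz hN.le
    calc ((3:ℝ)⁻¹)^N * ‖z‖ ≤ ((3:ℝ)⁻¹)^N * 3^N := by
          apply mul_le_mul_of_nonneg_left hle (by positivity)
      _ = 1 := by rw [← mul_pow]; norm_num
  have nv := norm_nonneg v
  have nx := norm_nonneg x
  have ny := norm_nonneg y
  have nu := norm_nonneg u
  set U : ℤ_[3] := ⟨(3:ℚ_[3])^N * u, hbound u (by linarith)⟩ with hU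
  set V : ℤ_[3] := ⟨(3:ℚ_[3])^N * v, hbound v (by linarith)⟩ with hV
  set X : ℤ_[3] := ⟨(3:ℚ_[3])^N * x, hbound x (by linarith)⟩ with hX
  set Y : ℤ_[3] := ⟨(3:ℚ_[3])^N * y, hbound y (by linarith)⟩ with hY
  have hEq : 12*(7*U^2 - 12*U*V + 18*V^2) = 139*X^2 + 76*X*Y + 316*Y^2 := by
    apply Subtype.coe_injective
    push_cast
    show 12*(7*((3:ℚ_[3])^N * u)^2 - 12*((3:ℚ_[3])^N * u)*((3:ℚ_[3])^N * v)
        + 18*((3:ℚ_[3])^N * v)^2)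
      = 139*((3:ℚ_[3])^N * x)^2 + 76*((3:ℚ_[3])^N * x)*((3:ℚ_[3])^N * y)
        + 316*((3:ℚ_[3])^N * y)^2
    linear_combination ((3:ℚ_[3])^N)^2 * h1
  have hUz : U = 0 := eq_zero_of_forall_pow_dvd U (fun n => (descent n U V X Y hEq).1)
  have hVz : V = 0 := eq_zero_of_forall_pow_dvd V (fun n => (descent n U V X Y hEq).2.1)
  have hXz : X = 0 := eq_zero_of_forall_pow_dvd X (fun n => (descent n U V X Y hEq).2.2.1)
  have hYz : Y = 0 := eq_zero_of_forall_pow_dvd Y (fun n => (descent n U V X Y hEq).2.2.2)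
  have h3N : (3:ℚ_[3])^N ≠ 0 := pow_ne_zero _ (by norm_num)
  have hu0 : (3:ℚ_[3])^N * u = 0 := congrArg (fun z : ℤ_[3] => (z : ℚ_[3])) hUz
  have hv0 : (3:ℚ_[3])^N * v = 0 := congrArg (fun z : ℤ_[3] => (z : ℚ_[3])) hVz
  have hx0 : (3:ℚ_[3])^N * x = 0 := congrArg (fun z : ℤ_[3] => (z : ℚ_[3])) hXz
  have hy0 : (3:ℚ_[3])^N * y = 0 := congrArg (fun z : ℤ_[3] => (z : ℚ_[3])) hYz
  exact ⟨(mul_eq_zero.mp hu0).resolve_left h3N, (mul_eq_zero.mp hv0).resolve_left h3N,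
    (mul_eq_zero.mp hx0).resolve_left h3N, (mul_eq_zero.mp hy0).resolve_left h3N⟩
end

section
/- For all $u, v, x, y$ in the field $\mathbb{Q}_3$ of $3$-adic numbers, if $\tfrac{5}{96}(25u^2 - 4uv + 52v^2) = \tfrac{1}{8}(5x^2 + 8y^2)$ then $u = v = x = y = 0$. -/
/-!
Multiplying by `480` and completing the square turns the equation into
`(25u - 2v)² + (36v)² = 3 ((10x)² + 160 y²)`. Both binary forms `s² + c t²` occurring here
(`c = 1, 160`) have no nontrivial zero modulo `3`, so after scaling the larger of the two
variables to a `3`-adic unit, the form takes a unit value: `‖s² + c t²‖ = max(‖s‖, ‖t‖)²`.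
Hence the left side has even valuation and the right side odd valuation, unless both vanish.
-/

theorem exists_norm_eq_max {E : Type*} [Norm E] (a b : E) :
    ∃ t, (t = a ∨ t = b) ∧ max ‖a‖ ‖b‖ = ‖t‖ := by
  rcases max_choice ‖a‖ ‖b‖ with h | h
  exacts [⟨a, .inl rfl, h⟩, ⟨b, .inr rfl, h⟩]

namespace PadicInt

variable {p : ℕ} [Fact p.Prime]

@[simp, norm_cast]
theorem coe_ofNat (n : ℕ) [n.AtLeastTwo] : ((ofNat(n) : ℤ_[p]) : ℚ_[p]) = ofNat(n) :=
  coe_natCast n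

theorem toZMod_eq_zero_iff_norm_lt_one {z : ℤ_[p]} : toZMod z = 0 ↔ ‖z‖ < 1 := by
  rw [← RingHom.mem_ker, ker_toZMod, IsLocalRing.mem_maximalIdeal, mem_nonunits]

theorem norm_sq_add_mul_sq_eq_one {c : ℤ_[p]}
    (hc : ∀ s t : ZMod p, s ^ 2 + toZMod c * t ^ 2 = 0 → s = 0 ∧ t = 0)
    {a b : ℤ_[p]} (hab : ‖a‖ = 1 ∨ ‖b‖ = 1) : ‖a ^ 2 + c * b ^ 2‖ = 1 := by
  refine (norm_le_one _).eq_or_lt.resolve_right fun hlt => ?_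
  obtain ⟨ha, hb⟩ := hc (toZMod a) (toZMod b) <| by
    simpa using toZMod_eq_zero_iff_norm_lt_one.mpr hlt
  rw [toZMod_eq_zero_iff_norm_lt_one] at ha hb
  rcases hab with h | h <;> linarith

end PadicInt

namespace Padic

variable {p : ℕ} [Fact p.Prime]

theorem norm_sq_add_mul_sq {c : ℤ_[p]}
    (hc : ∀ s t : ZMod p, s ^ 2 + PadicInt.toZMod c * t ^ 2 = 0 → s = 0 ∧ t = 0)
    (a b : ℚ_[p]) : ‖a ^ 2 + c * b ^ 2‖ = max ‖a‖ ‖b‖ ^ 2 := by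
  obtain ⟨t, ht, hmax⟩ := exists_norm_eq_max a b
  rcases eq_or_ne t 0 with rfl | ht0
  · have : ‖a‖ ≤ 0 ∧ ‖b‖ ≤ 0 := by simpa using hmax.le
    simp [norm_le_zero_iff.mp this.1, norm_le_zero_iff.mp this.2]
  have hle : ∀ z, ‖z‖ ≤ max ‖a‖ ‖b‖ → ‖z / t‖ ≤ 1 := fun z hz => by
    rw [norm_div, div_le_one (norm_pos_iff.mpr ht0)]; rwa [← hmax]
  set a' : ℤ_[p] := ⟨a / t, hle a (le_max_left _ _)⟩
  set b' : ℤ_[p] := ⟨b / t, hle b (le_max_right _ _)⟩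
  have hunit : ‖a'‖ = 1 ∨ ‖b'‖ = 1 := by
    rcases ht with rfl | rfl <;> simp [a', b', ht0]
  have hscale : a ^ 2 + c * b ^ 2 = t ^ 2 * ((a' ^ 2 + c * b' ^ 2 : ℤ_[p]) : ℚ_[p]) := by
    have : ((a' ^ 2 + c * b' ^ 2 : ℤ_[p]) : ℚ_[p]) = (a / t) ^ 2 + c * (b / t) ^ 2 := by
      push_cast; rfl
    rw [this]
    field_simp
  rw [hscale, norm_mul, norm_pow, ← PadicInt.norm_def,
    PadicInt.norm_sq_add_mul_sq_eq_one hc hunit, hmax, mul_one]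

theorem norm_sq_ne_inv_mul_norm_sq (z : ℚ_[p]) {w : ℚ_[p]} (hw : w ≠ 0) :
    ‖z‖ ^ 2 ≠ (p : ℝ)⁻¹ * ‖w‖ ^ 2 := by
  have hp : (1 : ℝ) < p := by exact_mod_cast (Fact.out : p.Prime).one_lt
  rcases eq_or_ne z 0 with rfl | hz
  · simp [hw, (Fact.out : p.Prime).ne_zero]
  intro h
  rw [norm_eq_zpow_neg_valuation hz, norm_eq_zpow_neg_valuation hw, ← zpow_natCast,
    ← zpow_natCast, ← zpow_mul, ← zpow_mul, ← zpow_neg_one, ← zpow_add₀ (by positivity)] at h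
  have := zpow_right_injective₀ (by positivity) hp.ne' h
  omega

theorem eq_zero_of_sq_add_mul_sq_eq_p_mul {c d : ℤ_[p]}
    (hc : ∀ s t : ZMod p, s ^ 2 + PadicInt.toZMod c * t ^ 2 = 0 → s = 0 ∧ t = 0)
    (hd : ∀ s t : ZMod p, s ^ 2 + PadicInt.toZMod d * t ^ 2 = 0 → s = 0 ∧ t = 0)
    {a b e f : ℚ_[p]} (h : a ^ 2 + c * b ^ 2 = p * (e ^ 2 + d * f ^ 2)) :
    a = 0 ∧ b = 0 ∧ e = 0 ∧ f = 0 := by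
  have hnorm : max ‖a‖ ‖b‖ ^ 2 = (p : ℝ)⁻¹ * max ‖e‖ ‖f‖ ^ 2 := by
    rw [← norm_sq_add_mul_sq hc, ← norm_sq_add_mul_sq hd, h, norm_mul, norm_p]
  obtain ⟨s, -, hs⟩ := exists_norm_eq_max a b
  obtain ⟨w, hw, hw'⟩ := exists_norm_eq_max e f
  have hw0 : w = 0 := by
    by_contra hw0
    exact norm_sq_ne_inv_mul_norm_sq s hw0 (hs ▸ hw' ▸ hnorm)
  have hef : max ‖e‖ ‖f‖ = 0 := by simp [hw', hw0]
  have hab : max ‖a‖ ‖b‖ = 0 := by simpa [hef] using hnorm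
  simp only [le_antisymm_iff, sup_le_iff, norm_le_zero_iff] at hab hef
  exact ⟨hab.1.1, hab.1.2, hef.1.1, hef.1.2⟩

end Padic

/-- The quadratic form `(5/96)(25u² - 4uv + 52v²) - (1/8)(5x² + 8y²)` is anisotropic
over `ℚ₃`. -/
theorem Z103_form_anisotropic_over_Q3 :
    ∀ u v x y : ℚ_[3],
      (5/96 : ℚ_[3]) * (25*u^2 - 4*u*v + 52*v^2)
          = (1/8 : ℚ_[3]) * (5*x^2 + 8*y^2) →
        u = 0 ∧ v = 0 ∧ x = 0 ∧ y = 0 := by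
  intro u v x y h
  have hdiag : (25*u - 2*v) ^ 2 + ((1 : ℤ_[3]) : ℚ_[3]) * (36*v) ^ 2
      = (3 : ℕ) * ((10*x) ^ 2 + ((160 : ℤ_[3]) : ℚ_[3]) * y ^ 2) := by
    push_cast
    linear_combination 480 * h
  obtain ⟨h₁, h₂, h₃, h₄⟩ := Padic.eq_zero_of_sq_add_mul_sq_eq_p_mul
    (by rw [map_one]; decide) (by rw [map_ofNat]; decide) hdiag
  have hv : v = 0 := by simpa using h₂
  refine ⟨?_, hv, by simpa using h₃, h₄⟩
  simpa [hv] using h₁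
end

section
/- For all $u, v, x, y$ in the field $\mathbb{Q}_{11}$ of $11$-adic numbers, if $\tfrac{11}{480}(57u^2 - 46uv + 137v^2) = \tfrac{1}{240}(541x^2 - 228xy + 1196y^2)$ then $u = v = x = y = 0$. -/
/-!
Up to scaling, the equation reads `C(x - 2y, 11y) = 11 A(u, v)` with
`A = 57u² - 46uv + 137v²` and `C = 1082X² + 352XY + 48Y²`. Both `A` and `C` have `11`-adic integral
coefficients and reduce to anisotropic forms over `𝔽₁₁`, hence `‖A(u, v)‖ = max(‖u‖, ‖v‖)²` and
likewise for `C`: both forms take only values of even valuation. The two sides then have valuations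
of different parity unless all variables vanish.
-/

instance : Fact (Nat.Prime 11) := ⟨by norm_num⟩

def binaryForm {R : Type*} [CommRing R] (a b c x y : R) : R :=
  a * x ^ 2 + b * x * y + c * y ^ 2

namespace binaryForm

variable {R S : Type*} [CommRing R] [CommRing S]

def IsAnisotropic (a b c : R) : Prop :=
  ∀ x y : R, binaryForm a b c x y = 0 → x = 0 ∧ y = 0

theorem map (f : R →+* S) (a b c x y : R) :
    f (binaryForm a b c x y) = binaryForm (f a) (f b) (f c) (f x) (f y) := by
  simp [binaryForm]

theorem swap (a b c x y : R) : binaryForm a b c x y = binaryForm c b a y x := by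
  unfold binaryForm; ring

theorem IsAnisotropic.swap {a b c : R} (h : IsAnisotropic a b c) : IsAnisotropic c b a :=
  fun x y hxy => (h y x (by rwa [binaryForm.swap])).symm

theorem eq_sq_mul {K : Type*} [Field K] (a b c : K) {x : K} (hx : x ≠ 0) (y : K) :
    binaryForm a b c x y = x ^ 2 * binaryForm a b c 1 (y / x) := by
  unfold binaryForm; field_simp

end binaryForm

namespace PadicInt

variable {p : ℕ} [Fact p.Prime]

theorem norm_eq_one_of_toZMod_ne_zero {z : ℤ_[p]} (hz : toZMod z ≠ 0) : ‖z‖ = 1 := by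
  refine isUnit_iff.mp (not_not.mp fun h => hz ?_)
  rwa [← RingHom.mem_ker, ker_toZMod, IsLocalRing.mem_maximalIdeal]

end PadicInt

namespace Padic

open PadicInt

variable {p : ℕ} [Fact p.Prime] {a b c : ℤ_[p]}

theorem norm_binaryForm_one (h : binaryForm.IsAnisotropic (toZMod a) (toZMod b) (toZMod c))
    {t : ℚ_[p]} (ht : ‖t‖ ≤ 1) : ‖binaryForm (a : ℚ_[p]) b c 1 t‖ = 1 := by
  obtain ⟨t, rfl⟩ : ∃ z : ℤ_[p], (z : ℚ_[p]) = t := ⟨⟨t, ht⟩, rfl⟩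
  have hred : toZMod (binaryForm a b c 1 t) ≠ 0 := by
    rw [binaryForm.map, map_one]
    exact fun h0 => one_ne_zero (h _ _ h0).1
  have hnorm := norm_eq_one_of_toZMod_ne_zero hred
  rw [norm_def] at hnorm
  simpa [binaryForm] using hnorm

theorem norm_binaryForm (h : binaryForm.IsAnisotropic (toZMod a) (toZMod b) (toZMod c))
    (x y : ℚ_[p]) : ‖binaryForm (a : ℚ_[p]) b c x y‖ = max ‖x‖ ‖y‖ ^ 2 := by
  wlog hyx : ‖y‖ ≤ ‖x‖ generalizing a b c x y
  · rw [binaryForm.swap, max_comm]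
    exact this h.swap y x (le_of_not_ge hyx)
  rcases eq_or_ne x 0 with rfl | hx
  · obtain rfl : y = 0 := norm_le_zero_iff.mp (by simpa using hyx)
    simp [binaryForm]
  have hquot : ‖y / x‖ ≤ 1 := by
    rw [norm_div]; exact div_le_one_of_le₀ hyx (norm_nonneg x)
  rw [binaryForm.eq_sq_mul _ _ _ hx, norm_mul, norm_binaryForm_one h hquot, max_eq_left hyx,
    norm_pow, mul_one]

theorem eq_zero_of_norm_sq_eq_norm_p_mul_sq {w₁ w₂ : ℚ_[p]}
    (h : ‖w₂‖ ^ 2 = ‖(p : ℚ_[p])‖ * ‖w₁‖ ^ 2) : w₁ = 0 := by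
  by_contra hw₁
  have hw₂ : w₂ ≠ 0 := by
    rintro rfl
    simp [hw₁, (Fact.out : p.Prime).ne_zero] at h
  -- compare exponents: `2 v(w₂) = 1 + 2 v(w₁)` is impossible
  have hp : (1 : ℝ) < p := mod_cast (Fact.out : p.Prime).one_lt
  rw [Padic.norm_p, norm_eq_zpow_neg_valuation hw₁, norm_eq_zpow_neg_valuation hw₂,
    ← zpow_natCast, ← zpow_natCast, ← zpow_mul, ← zpow_mul, ← zpow_neg_one,
    ← zpow_add₀ (by positivity)] at h
  have := zpow_right_injective₀ (by positivity) hp.ne' h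
  omega

theorem eq_zero_of_binaryForm_eq_p_mul {a' b' c' : ℤ_[p]}
    (h : binaryForm.IsAnisotropic (toZMod a) (toZMod b) (toZMod c))
    (h' : binaryForm.IsAnisotropic (toZMod a') (toZMod b') (toZMod c')) {x y u v : ℚ_[p]}
    (hq : binaryForm (a : ℚ_[p]) b c x y = p * binaryForm (a' : ℚ_[p]) b' c' u v) :
    x = 0 ∧ y = 0 ∧ u = 0 ∧ v = 0 := by
  have hnorm := congrArg norm hq
  rw [norm_mul, norm_binaryForm h, norm_binaryForm h'] at hnorm
  obtain ⟨w₁, hw₁⟩ : ∃ w : ℚ_[p], ‖w‖ = max ‖u‖ ‖v‖ :=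
    (max_choice ‖u‖ ‖v‖).elim (fun hu => ⟨u, hu.symm⟩) (fun hv => ⟨v, hv.symm⟩)
  obtain ⟨w₂, hw₂⟩ : ∃ w : ℚ_[p], ‖w‖ = max ‖x‖ ‖y‖ :=
    (max_choice ‖x‖ ‖y‖).elim (fun hx => ⟨x, hx.symm⟩) (fun hy => ⟨y, hy.symm⟩)
  rw [← hw₁, ← hw₂] at hnorm
  obtain rfl := eq_zero_of_norm_sq_eq_norm_p_mul_sq hnorm
  obtain rfl : w₂ = 0 := by simpa using hnorm
  simp only [norm_zero] at hw₁ hw₂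
  obtain ⟨hx, hy⟩ := max_le_iff.mp hw₂.ge
  obtain ⟨hu, hv⟩ := max_le_iff.mp hw₁.ge
  exact ⟨norm_le_zero_iff.mp hx, norm_le_zero_iff.mp hy, norm_le_zero_iff.mp hu,
    norm_le_zero_iff.mp hv⟩

end Padic

/-- The quadratic form `(11/480)(57u² - 46uv + 137v²) - (1/240)(541x² - 228xy + 1196y²)`
is anisotropic over `ℚ₁₁`. -/
theorem Z111_form_anisotropic_over_Q11 :
    ∀ u v x y : ℚ_[11],
      (11/480 : ℚ_[11]) * (57*u^2 - 46*u*v + 137*v^2)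
          = (1/240 : ℚ_[11]) * (541*x^2 - 228*x*y + 1196*y^2) →
        u = 0 ∧ v = 0 ∧ x = 0 ∧ y = 0 := by
  intro u v x y h
  have hA : binaryForm.IsAnisotropic (PadicInt.toZMod (57 : ℤ_[11])) (PadicInt.toZMod (-46))
      (PadicInt.toZMod 137) := by
    simp only [map_ofNat, map_neg]; unfold binaryForm.IsAnisotropic binaryForm; decide
  have hC : binaryForm.IsAnisotropic (PadicInt.toZMod (1082 : ℤ_[11])) (PadicInt.toZMod 352)
      (PadicInt.toZMod 48) := by
    simp only [map_ofNat]; unfold binaryForm.IsAnisotropic binaryForm; decide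
  -- `541x² - 228xy + 1196y² ≡ 2(x - 2y)² mod 11`; twice it equals `C(x - 2y, 11y)`, and the
  -- reduction `4(X² + Y²)` of `C` is anisotropic since `-1` is not a square mod `11`.
  have key : binaryForm ((1082 : ℤ_[11]) : ℚ_[11]) (352 : ℤ_[11]) (48 : ℤ_[11]) (x - 2 * y) (11 * y)
      = (11 : ℕ) * binaryForm ((57 : ℤ_[11]) : ℚ_[11]) (-46 : ℤ_[11]) (137 : ℤ_[11]) u v := by
    simp only [binaryForm, PadicInt.coe_ofNat, PadicInt.coe_neg]
    push_cast
    linear_combination (-480 : ℚ_[11]) * h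
  obtain ⟨hX, hY, hu, hv⟩ := Padic.eq_zero_of_binaryForm_eq_p_mul hC hA key
  obtain rfl : y = 0 := by simpa using hY
  exact ⟨hu, hv, by simpa using hX, rfl⟩
end
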